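/- (Refinement property of diffusionlets, heat case.) Let c > 0, let s ⊆ ℤ be a finite set, let h : ℤ → ℝ, and let φ : ℝ → ℝ be a bounded measurable function satisfying the refinement equation φ(x) = 2·∑_{n ∈ s} h_n·φ(2x − n) for all x ∈ ℝ. Define the heat evolution (H_t φ)(x) = ∫_ℝ φ(y)·(4πct)^(−1/2)·exp(−(x−y)²/(4ct)) dy for t > 0. Then for every t > 0 and x ∈ ℝ, (H_t φ)(x) = 2·∑_{n ∈ s} h_n·(H_{4t} φ)(2x − n). -/

import Mathlib

/-!
Heat evolution is linear in the initial datum, so by the refinement equation `H_t φ` splits into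
the terms `2 h_n · H_t (φ(2·-n))`. The heat kernel scales parabolically,
`K_{a²t}(a z) = a⁻¹ K_t(z)`, so the substitution `u = 2y - n` turns each of these into
`(H_{4t} φ)(2x - n)`.
-/

open MeasureTheory Real

/-- The heat evolution `(H_t g)(x) = ∫ g(y)·(4πct)^(−1/2)·exp(−(x−y)²/(4ct)) dy`. -/
noncomputable def heatEvol (c t : ℝ) (g : ℝ → ℝ) (x : ℝ) : ℝ :=
  ∫ y : ℝ, g y * ((4 * π * c * t) ^ (-(1 : ℝ) / 2)
    * Real.exp (-(x - y) ^ 2 / (4 * c * t)))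

noncomputable def heatKernel (c t z : ℝ) : ℝ :=
  (4 * π * c * t) ^ (-(1 : ℝ) / 2) * Real.exp (-z ^ 2 / (4 * c * t))

theorem heatEvol_eq_integral_mul_heatKernel (c t : ℝ) (g : ℝ → ℝ) (x : ℝ) :
    heatEvol c t g x = ∫ y, g y * heatKernel c t (x - y) :=
  rfl

theorem integrable_heatKernel_sub {c t : ℝ} (hc : 0 < c) (ht : 0 < t) (x : ℝ) :
    Integrable fun y => heatKernel c t (x - y) := by
  have hgauss : Integrable fun y => Real.exp (-(1 / (4 * c * t)) * (y - x) ^ 2) :=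
    (integrable_exp_neg_mul_sq (by positivity)).comp_sub_right x
  refine (hgauss.const_mul ((4 * π * c * t) ^ (-(1 : ℝ) / 2))).congr (.of_forall fun y => ?_)
  simp only [heatKernel]
  congr 2
  field_simp
  ring

theorem integrable_mul_heatKernel_sub {c t : ℝ} (hc : 0 < c) (ht : 0 < t) {g : ℝ → ℝ}
    (hg : AEStronglyMeasurable g) {C : ℝ} (hgC : ∀ y, |g y| ≤ C) (x : ℝ) :
    Integrable fun y => g y * heatKernel c t (x - y) :=
  (integrable_heatKernel_sub hc ht x).bdd_mul hg (.of_forall hgC)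

theorem heatKernel_mul {c t : ℝ} (hc : 0 < c) (ht : 0 < t) {a : ℝ} (ha : 0 < a) (z : ℝ) :
    heatKernel c (a ^ 2 * t) (a * z) = a⁻¹ * heatKernel c t z := by
  have hcoef : (4 * π * c * (a ^ 2 * t)) ^ (-(1 : ℝ) / 2)
      = a⁻¹ * (4 * π * c * t) ^ (-(1 : ℝ) / 2) := by
    rw [show 4 * π * c * (a ^ 2 * t) = a ^ 2 * (4 * π * c * t) by ring,
      mul_rpow (by positivity) (by positivity), ← rpow_natCast, ← rpow_mul ha.le]
    norm_num [rpow_neg_one]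
  have hexp : -(a * z) ^ 2 / (4 * c * (a ^ 2 * t)) = -z ^ 2 / (4 * c * t) := by
    field_simp
  rw [heatKernel, heatKernel, hcoef, hexp, mul_assoc]

theorem heatEvol_const_mul (c t a : ℝ) (g : ℝ → ℝ) (x : ℝ) :
    heatEvol c t (fun y => a * g y) x = a * heatEvol c t g x := by
  simp only [heatEvol_eq_integral_mul_heatKernel, mul_assoc, integral_const_mul]

theorem heatEvol_finsetSum {c t : ℝ} {ι : Type*} (s : Finset ι) {g : ι → ℝ → ℝ} {x : ℝ}
    (hg : ∀ i ∈ s, Integrable fun y => g i y * heatKernel c t (x - y)) :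
    heatEvol c t (fun y => ∑ i ∈ s, g i y) x = ∑ i ∈ s, heatEvol c t (g i) x := by
  simp only [heatEvol_eq_integral_mul_heatKernel, Finset.sum_mul]
  exact integral_finsetSum s hg

theorem heatEvol_comp_mul_sub {c t : ℝ} (hc : 0 < c) (ht : 0 < t) {a : ℝ} (ha : 0 < a)
    (g : ℝ → ℝ) (b x : ℝ) :
    heatEvol c t (fun y => g (a * y - b)) x = heatEvol c (a ^ 2 * t) g (a * x - b) := by
  set F : ℝ → ℝ := fun u => g u * heatKernel c (a ^ 2 * t) (a * x - b - u)
  have hF : ∀ y, g (a * y - b) * heatKernel c t (x - y) = a * F (a * y - b) := by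
    intro y
    simp only [F, show a * x - b - (a * y - b) = a * (x - y) by ring, heatKernel_mul hc ht ha]
    field_simp
  calc heatEvol c t (fun y => g (a * y - b)) x
      = a * ∫ y, F (a * y - b) := by
        simp only [heatEvol_eq_integral_mul_heatKernel, hF, integral_const_mul]
    _ = a * (|a⁻¹| • ∫ u, F (u - b)) := by
        rw [← Measure.integral_comp_mul_left (fun u => F (u - b))]
    _ = ∫ u, F u := by
        rw [integral_sub_right_eq_self, abs_of_pos (inv_pos.2 ha), smul_eq_mul,
          ← mul_assoc, mul_inv_cancel₀ ha.ne', one_mul]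

/-- Refinement property of diffusionlets (heat case): if the father wavelet
satisfies the refinement equation `φ(x) = 2·∑_{n ∈ s} h_n·φ(2x − n)`, then its
heat evolution satisfies `(H_t φ)(x) = 2·∑_{n ∈ s} h_n·(H_{4t} φ)(2x − n)`. -/
theorem heatlet_refinement
    (c : ℝ) (hc : 0 < c) (s : Finset ℤ) (h : ℤ → ℝ)
    (φ : ℝ → ℝ) (hφ : Measurable φ) (hφb : ∃ C, ∀ x, |φ x| ≤ C)
    (hrefine : ∀ x : ℝ, φ x = 2 * ∑ n ∈ s, h n * φ (2 * x - n)) :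
    ∀ t : ℝ, 0 < t → ∀ x : ℝ,
      heatEvol c t φ x = 2 * ∑ n ∈ s, h n * heatEvol c (4 * t) φ (2 * x - n) := by
  intro t ht x
  obtain ⟨C, hC⟩ := hφb
  have hterm : ∀ n ∈ s, Integrable fun y => h n * φ (2 * y - n) * heatKernel c t (x - y) := by
    intro n _
    simp only [mul_assoc]
    exact (integrable_mul_heatKernel_sub hc ht (hφ.comp (by fun_prop)).aestronglyMeasurable
      (fun y => hC (2 * y - n)) x).const_mul (h n)
  calc heatEvol c t φ x
      = heatEvol c t (fun y => 2 * ∑ n ∈ s, h n * φ (2 * y - n)) x := by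
        simp only [← hrefine]
    _ = 2 * ∑ n ∈ s, h n * heatEvol c t (fun y => φ (2 * y - n)) x := by
        simp only [heatEvol_const_mul, heatEvol_finsetSum s hterm]
    _ = 2 * ∑ n ∈ s, h n * heatEvol c (4 * t) φ (2 * x - n) := by
        norm_num only [heatEvol_comp_mul_sub hc ht two_pos]
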